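/- Let w ∈ W be a non-spiral element of the affine Weyl group of type Ã₂, let δ ∈ {α₁,α₂,α̃}, and let ε ∈ {0,1} be such that H_{δ,ε} is nearer to wq than H_{δ,1−ε} (i.e., |(δ,wq) − ε| < |(δ,wq) − (1−ε)|). Then s_{δ,ε}w < w in the Bruhat order. -/

import Mathlib

noncomputable section

open scoped RealInnerProductSpace

/-- The plane `V = ℝ²`. -/
abbrev V : Type := EuclideanSpace ℝ (Fin 2)

/-- The affine reflection in the hyperplane `H_{α,k}`. -/
def sRefl (α : V) (k : ℤ) (v : V) : V := v - (⟪α, v⟫ - (k : ℝ)) • α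

/-- The positive roots `α₁, α₂, α̃ = α₁ + α₂` of the `A₂` root system. -/
def PosRoots (a1 a2 : V) : Set V := {a1, a2, a1 + a2}

/-- The root system `Φ` of type `A₂`. -/
def Phi (a1 a2 : V) : Set V := {α | α ∈ PosRoots a1 a2 ∨ -α ∈ PosRoots a1 a2}

/-- A permutation of `V` acting as the affine reflection `s_{α,k}` for some `α ∈ Φ`, `k ∈ ℤ`. -/
def IsAffRefl (a1 a2 : V) (g : Equiv.Perm V) : Prop :=
  ∃ α ∈ Phi a1 a2, ∃ k : ℤ, ∀ v : V, g v = sRefl α k v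

/-- The affine Weyl group of type `Ã₂`: the group of (affine) transformations of `V`
generated by all the affine reflections `s_{α,k}`, `α ∈ Φ`, `k ∈ ℤ`. -/
def AffWeyl (a1 a2 : V) : Subgroup (Equiv.Perm V) :=
  Subgroup.closure {g | IsAffRefl a1 a2 g}

/-- The action of an element of the affine Weyl group on the plane `V`. -/
def act {a1 a2 : V} (w : AffWeyl a1 a2) (v : V) : V := (w : Equiv.Perm V) v

/-- `g` is one of the simple reflections `s₁ = s_{α₁,0}`, `s₂ = s_{α₂,0}`, `s₀ = s_{α̃,1}`. -/
def IsSimpleRefl (a1 a2 : V) (g : Equiv.Perm V) : Prop :=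
  (∀ v : V, g v = sRefl a1 0 v) ∨ (∀ v : V, g v = sRefl a2 0 v) ∨
    (∀ v : V, g v = sRefl (a1 + a2) 1 v)

/-- The length function of the affine Weyl group `W` of type `Ã₂`, with respect to the
simple reflections. -/
def len (a1 a2 : V) (w : AffWeyl a1 a2) : ℕ :=
  sInf {n | ∃ l : List (AffWeyl a1 a2),
    (∀ g ∈ l, IsSimpleRefl a1 a2 (g : Equiv.Perm V)) ∧ l.length = n ∧ l.prod = w}

/-- The reflections of `W` are the `s_{α,k}`, `α ∈ Φ`, `k ∈ ℤ`. -/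
def IsReflW (a1 a2 : V) (g : Equiv.Perm V) : Prop := IsAffRefl a1 a2 g

/-- The Bruhat order on `W`: the partial order generated by `u < r * u` whenever `r` is a
reflection and `ℓ(u) < ℓ(r * u)`. -/
def BruhatLE (a1 a2 : V) (x w : AffWeyl a1 a2) : Prop :=
  Relation.ReflTransGen
    (fun a b => ∃ r : AffWeyl a1 a2, IsReflW a1 a2 (r : Equiv.Perm V) ∧ b = r * a ∧
      len a1 a2 a < len a1 a2 b) x w

/-- The strict Bruhat order. -/
def BruhatLT (a1 a2 : V) (x w : AffWeyl a1 a2) : Prop := BruhatLE a1 a2 x w ∧ x ≠ w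

/-- The fundamental alcove `A₀`. -/
def A0 (a1 a2 : V) : Set V :=
  {v | 0 < ⟪a1, v⟫ ∧ 0 < ⟪a2, v⟫ ∧ ⟪a1 + a2, v⟫ < 1}

/-- The fundamental `α`-root strip. -/
def Strip (α : V) : Set V := {v | 0 ≤ ⟪α, v⟫ ∧ ⟪α, v⟫ ≤ 1}

/-- The union of the three fundamental root strips. -/
def StripUnion (a1 a2 : V) : Set V := Strip a1 ∪ Strip a2 ∪ Strip (a1 + a2)

/-- `w` is spiral if the alcove center `w q` lies in a fundamental root strip. -/
def IsSpiral (a1 a2 q : V) (w : AffWeyl a1 a2) : Prop :=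
  (w : Equiv.Perm V) q ∈ StripUnion a1 a2

/-- The chambers: connected components of the complement of the union of the fundamental
root strips. -/
def IsChamber (a1 a2 : V) (C : Set V) : Prop :=
  ∃ v ∈ (StripUnion a1 a2)ᶜ, C = connectedComponentIn (StripUnion a1 a2)ᶜ v

/-- The chamber containing the alcove center `w q` (for non-spiral `w`). -/
def chamberOf (a1 a2 q : V) (w : AffWeyl a1 a2) : Set V :=
  connectedComponentIn (StripUnion a1 a2)ᶜ ((w : Equiv.Perm V) q)

/-- The root hyperplane (line) `H_{α,k}`. -/
def Hplane (α : V) (k : ℤ) : Set V := {v | ⟪α, v⟫ = (k : ℝ)}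

/-- `H_{α,i}` (with `α` a positive root and `i ∈ {0,1}`) is a wall of the chamber `C`:
the boundary of `C` meets `H_{α,i}` in more than one point (a ray). -/
def IsWall (a1 a2 : V) (C : Set V) (α : V) (i : ℤ) : Prop :=
  α ∈ PosRoots a1 a2 ∧ (i = 0 ∨ i = 1) ∧
    ∃ u ∈ frontier C ∩ Hplane α i, ∃ v ∈ frontier C ∩ Hplane α i, u ≠ v

/-- A chamber is even if both of its walls are among the fixed hyperplanes
`H_{α₁,0}, H_{α₂,0}, H_{α̃,1}` of the simple reflections. -/
def IsEvenChamber (a1 a2 : V) (C : Set V) : Prop :=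
  IsChamber a1 a2 C ∧ ∀ α i, IsWall a1 a2 C α i →
    ((α = a1 ∧ i = 0) ∨ (α = a2 ∧ i = 0) ∨ (α = a1 + a2 ∧ i = 1))

/-- `q^w_x = n^w_x - ℓ(w)`, where `n^w_x` is the number of reflections `r` with `r x ≤ w`. -/
def qInt (a1 a2 : V) (w x : AffWeyl a1 a2) : ℤ :=
  (Set.ncard {r : AffWeyl a1 a2 |
      IsReflW a1 a2 (r : Equiv.Perm V) ∧ BruhatLE a1 a2 (r * x) w} : ℤ)
    - (len a1 a2 w : ℤ)

/-- The root `α ∈ Φ` points into the chamber `C`. -/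
def PointsInto (a1 a2 : V) (C : Set V) (α : V) : Prop :=
  α ∈ Phi a1 a2 ∧ ∀ v ∈ C, v + α ∈ C

/-- `L(w)`: the subgroup generated by the simple reflections `s` with `s w < w`. -/
def Lsub (a1 a2 : V) (w : AffWeyl a1 a2) : Subgroup (AffWeyl a1 a2) :=
  Subgroup.closure {s | IsSimpleRefl a1 a2 (s : Equiv.Perm V) ∧ BruhatLT a1 a2 (s * w) w}

/-- `w` is twisted spiral if `w = z s` with `z` spiral of even length, `s` simple, and
`ℓ(w) = ℓ(z) + 1`. -/
def IsTwistedSpiral (a1 a2 q : V) (w : AffWeyl a1 a2) : Prop :=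
  ∃ z s : AffWeyl a1 a2, IsSpiral a1 a2 q z ∧ Even (len a1 a2 z) ∧
    IsSimpleRefl a1 a2 (s : Equiv.Perm V) ∧ w = z * s ∧ len a1 a2 w = len a1 a2 z + 1

/-!
In the coordinates `(⟪α₁, v⟫, ⟪α₂, v⟫)` the alcove centers are the points `(X + ρ/3, Y + ρ/3)`
with `X, Y ∈ ℤ` and `ρ ∈ {1, 2}`, and every element of `W` acts by an integral affine map whose
linear part lies in the Weyl group and whose translation lies in the root lattice. The number
`|X| + |Y| + |X + Y + ρ - 1|` of hyperplanes separating such a center from `A₀` changes by at most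
one under a simple reflection and, unless the center is `q`, drops by one under a suitable one.
Since only `1 ∈ W` fixes `q`, this number at `w q` is `ℓ(w)`. When `w q` lies in no root strip,
reflecting in the nearer of the walls `H_{δ,0}`, `H_{δ,1}` strictly lowers it, so
`ℓ(s_{δ,ε} w) < ℓ(w)`, and `s_{δ,ε} w < w` is a single step of the Bruhat order.
-/

lemma floor_intCast_add_div_three {k : Type*} [Field k] [LinearOrder k] [IsStrictOrderedRing k]
    [FloorRing k] (X : ℤ) {ρ : ℤ} (hρ : ρ = 1 ∨ ρ = 2) : ⌊(X : k) + ρ / 3⌋ = X := by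
  rw [Int.floor_intCast_add, add_eq_left, Int.floor_eq_zero_iff]
  rcases hρ with rfl | rfl <;> norm_num

lemma abs_sub_lt_abs_sub_one_sub_iff {R : Type*} [CommRing R] [LinearOrder R]
    [IsStrictOrderedRing R] (c ε : R) :
    |c - ε| < |c - (1 - ε)| ↔ 0 < (2 * ε - 1) * (2 * c - 1) := by
  rw [← sq_lt_sq, ← sub_pos,
    show (c - (1 - ε)) ^ 2 - (c - ε) ^ 2 = (2 * ε - 1) * (2 * c - 1) by ring]

lemma inner_sRefl (β α : V) (k : ℤ) (v : V) :
    ⟪β, sRefl α k v⟫ = ⟪β, v⟫ - (⟪α, v⟫ - k) * ⟪β, α⟫ := by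
  simp only [sRefl, inner_sub_right, real_inner_smul_right]

lemma sRefl_neg (α : V) (k : ℤ) : sRefl (-α) k = sRefl α (-k) := by
  funext v
  simp only [sRefl, inner_neg_left]
  push_cast
  module

lemma sRefl_involutive {α : V} (hα : ⟪α, α⟫ = 2) (k : ℤ) : Function.Involutive (sRefl α k) := by
  intro v
  simp only [sRefl, inner_sub_right, real_inner_smul_right, hα]
  module

lemma mem_strip_iff {δ v : V} {P σ : ℤ} (hv : ⟪δ, v⟫ = P + σ / 3) (hσ : σ = 1 ∨ σ = 2) :
    v ∈ Strip δ ↔ P = 0 := by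
  have h₀ : (0 : ℝ) < σ / 3 ∧ (σ : ℝ) / 3 < 1 := by rcases hσ with rfl | rfl <;> norm_num
  simp only [Strip, Set.mem_ofPred_eq, hv]
  constructor
  · rintro ⟨h₁, h₂⟩
    have : -1 < P := by exact_mod_cast (by linarith : (-1 : ℝ) < P)
    have : P < 1 := by exact_mod_cast (by linarith : (P : ℝ) < 1)
    omega
  · rintro rfl
    constructor <;> push_cast <;> linarith

lemma mul_pos_of_abs_sub_lt_abs_sub {P σ ε : ℤ} {c : ℝ} (hc : c = P + σ / 3)
    (h : |c - ε| < |c - (1 - ε)|) : 0 < (2 * ε - 1) * (6 * P + 2 * σ - 3) := by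
  rw [abs_sub_lt_abs_sub_one_sub_iff, hc] at h
  exact_mod_cast (by linarith : (0 : ℝ) < (2 * ε - 1) * (6 * P + 2 * σ - 3))

structure IsA2SimpleRoots (a1 a2 : V) : Prop where
  inner_a1_a1 : ⟪a1, a1⟫ = 2
  inner_a2_a2 : ⟪a2, a2⟫ = 2
  inner_a1_a2 : ⟪a1, a2⟫ = -1

/-- The alcove centers are exactly the points `v` satisfying this for some `X`, `Y`, `ρ`. -/
structure IsCenter (a1 a2 v : V) (X Y ρ : ℤ) : Prop where
  inner_a1 : ⟪a1, v⟫ = X + ρ / 3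
  inner_a2 : ⟪a2, v⟫ = Y + ρ / 3
  rho : ρ = 1 ∨ ρ = 2

/-- For `v` on no hyperplane `H_{α,k}`, the number of them separating `v` from `A₀`. -/
def sepCount (a1 a2 v : V) : ℕ :=
  ⌊⟪a1, v⟫⌋.natAbs + ⌊⟪a2, v⟫⌋.natAbs + ⌊⟪a1 + a2, v⟫⌋.natAbs

/-- The Weyl group of `A₂` acting on the coordinates `(⟪α₁, v⟫, ⟪α₂, v⟫)`. -/
def weylMatrices : List (Matrix (Fin 2) (Fin 2) ℤ) :=
  [1, !![-1, 0; 1, 1], !![1, 1; 0, -1], !![0, -1; -1, 0], !![-1, -1; 1, 0], !![0, 1; -1, -1]]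

lemma weylMatrices_mul_mem : ∀ M ∈ weylMatrices, ∀ N ∈ weylMatrices, M * N ∈ weylMatrices := by
  decide

lemma weylMatrices_row_sums : ∀ M ∈ weylMatrices,
    3 ∣ M 0 0 + M 0 1 - (M 1 0 + M 1 1) ∧ ¬ 3 ∣ M 0 0 + M 0 1 := by
  decide

/-- The condition `3 ∣ t₁ - t₂` says that the translation part lies in the root lattice. -/
def IsWeylAffine (a1 a2 : V) (g : Equiv.Perm V) : Prop :=
  ∃ M ∈ weylMatrices, ∃ t₁ t₂ : ℤ, 3 ∣ t₁ - t₂ ∧ ∀ v : V,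
    ⟪a1, g v⟫ = M 0 0 * ⟪a1, v⟫ + M 0 1 * ⟪a2, v⟫ + t₁ ∧
      ⟪a2, g v⟫ = M 1 0 * ⟪a1, v⟫ + M 1 1 * ⟪a2, v⟫ + t₂

section

variable {a1 a2 : V}

lemma IsSimpleRefl.isAffRefl {g : Equiv.Perm V} (hg : IsSimpleRefl a1 a2 g) :
    IsAffRefl a1 a2 g := by
  rcases hg with h | h | h
  · exact ⟨a1, .inl (.inl rfl), 0, h⟩
  · exact ⟨a2, .inl (.inr (.inl rfl)), 0, h⟩
  · exact ⟨a1 + a2, .inl (.inr (.inr rfl)), 1, h⟩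

lemma IsAffRefl.exists_posRoots {g : Equiv.Perm V} (hg : IsAffRefl a1 a2 g) :
    ∃ β ∈ PosRoots a1 a2, ∃ k : ℤ, ∀ v, g v = sRefl β k v := by
  obtain ⟨α, hα | hα, k, hk⟩ := hg
  · exact ⟨α, hα, k, hk⟩
  · exact ⟨-α, hα, -k, fun v => by rw [hk, sRefl_neg, neg_neg]⟩

lemma isWeylAffine_one : IsWeylAffine a1 a2 1 :=
  ⟨1, List.mem_cons_self .., 0, 0, by simp, fun v => by simp⟩

lemma IsWeylAffine.mul {g h : Equiv.Perm V} (hg : IsWeylAffine a1 a2 g)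
    (hh : IsWeylAffine a1 a2 h) : IsWeylAffine a1 a2 (g * h) := by
  obtain ⟨M, hM, s₁, s₂, hs, hgv⟩ := hg
  obtain ⟨N, hN, t₁, t₂, ht, hhv⟩ := hh
  refine ⟨M * N, weylMatrices_mul_mem M hM N hN, M 0 0 * t₁ + M 0 1 * t₂ + s₁,
    M 1 0 * t₁ + M 1 1 * t₂ + s₂, ?_, fun v => ?_⟩
  · have hrow := (weylMatrices_row_sums M hM).1
    rw [show M 0 0 * t₁ + M 0 1 * t₂ + s₁ - (M 1 0 * t₁ + M 1 1 * t₂ + s₂) =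
      (M 0 0 - M 1 0) * (t₁ - t₂) + (M 0 0 + M 0 1 - (M 1 0 + M 1 1)) * t₂ + (s₁ - s₂) by ring]
    exact dvd_add (dvd_add (dvd_mul_of_dvd_right ht _) (dvd_mul_of_dvd_left hrow _)) hs
  · simp only [Equiv.Perm.mul_apply, (hgv (h v)).1, (hgv (h v)).2, (hhv v).1, (hhv v).2,
      Matrix.mul_apply, Fin.sum_univ_two]
    push_cast
    constructor <;> ring

lemma IsCenter.of_three_mul {v : V} {m n : ℤ} (h₁ : 3 * ⟪a1, v⟫ = m) (h₂ : 3 * ⟪a2, v⟫ = n)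
    (hmn : 3 ∣ m - n) (hm : ¬ 3 ∣ m) : IsCenter a1 a2 v (m / 3) (n / 3) (m % 3) where
  inner_a1 := by
    have : (m : ℝ) = 3 * (m / 3 : ℤ) + (m % 3 : ℤ) := by exact_mod_cast (by omega : m = _)
    linear_combination (h₁ + this) / 3
  inner_a2 := by
    have : (n : ℝ) = 3 * (n / 3 : ℤ) + (m % 3 : ℤ) := by exact_mod_cast (by omega : n = _)
    linear_combination (h₂ + this) / 3
  rho := by omega

lemma IsWeylAffine.isCenter_apply {q : V} (hq1 : ⟪a1, q⟫ = 1 / 3) (hq2 : ⟪a2, q⟫ = 1 / 3)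
    {g : Equiv.Perm V} (hg : IsWeylAffine a1 a2 g) : ∃ X Y ρ, IsCenter a1 a2 (g q) X Y ρ := by
  obtain ⟨M, hM, t₁, t₂, ht, hgv⟩ := hg
  obtain ⟨hrow, hrow'⟩ := weylMatrices_row_sums M hM
  refine ⟨_, _, _, IsCenter.of_three_mul (m := M 0 0 + M 0 1 + 3 * t₁)
    (n := M 1 0 + M 1 1 + 3 * t₂) ?_ ?_ (by omega) (by omega)⟩
  · rw [(hgv q).1, hq1, hq2]; push_cast; ring
  · rw [(hgv q).2, hq1, hq2]; push_cast; ring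

namespace IsA2SimpleRoots

lemma inner_a2_a1 (hA : IsA2SimpleRoots a1 a2) : ⟪a2, a1⟫ = -1 := by
  rw [real_inner_comm, hA.inner_a1_a2]

lemma inner_a1_add (hA : IsA2SimpleRoots a1 a2) : ⟪a1, a1 + a2⟫ = 1 := by
  rw [inner_add_right, hA.inner_a1_a1, hA.inner_a1_a2]; norm_num

lemma inner_a2_add (hA : IsA2SimpleRoots a1 a2) : ⟪a2, a1 + a2⟫ = 1 := by
  rw [inner_add_right, hA.inner_a2_a1, hA.inner_a2_a2]; norm_num

lemma inner_self_of_mem_posRoots (hA : IsA2SimpleRoots a1 a2) {δ : V}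
    (hδ : δ ∈ PosRoots a1 a2) : ⟪δ, δ⟫ = 2 := by
  rcases hδ with rfl | rfl | rfl
  · exact hA.inner_a1_a1
  · exact hA.inner_a2_a2
  · rw [inner_add_left, hA.inner_a1_add, hA.inner_a2_add]; norm_num

lemma linearIndependent (hA : IsA2SimpleRoots a1 a2) : LinearIndependent ℝ ![a1, a2] := by
  rw [LinearIndependent.pair_iff]
  intro s t hst
  have e₁ := congrArg (⟪a1, ·⟫) hst
  have e₂ := congrArg (⟪a2, ·⟫) hst
  simp only [inner_add_right, real_inner_smul_right, inner_zero_right, hA.inner_a1_a1,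
    hA.inner_a1_a2, hA.inner_a2_a1, hA.inner_a2_a2] at e₁ e₂
  constructor <;> linarith

lemma ext_inner (hA : IsA2SimpleRoots a1 a2) {u v : V} (h1 : ⟪a1, u⟫ = ⟪a1, v⟫)
    (h2 : ⟪a2, u⟫ = ⟪a2, v⟫) : u = v := by
  refine InnerProductSpace.ext_inner_left_basis
    (basisOfLinearIndependentOfCardEqFinrank hA.linearIndependent (by simp)) fun i => ?_
  fin_cases i
  · simpa using h1
  · simpa using h2

lemma isWeylAffine_of_isAffRefl (hA : IsA2SimpleRoots a1 a2) {g : Equiv.Perm V}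
    (hg : IsAffRefl a1 a2 g) : IsWeylAffine a1 a2 g := by
  obtain ⟨β, hβ | hβ | hβ, k, hk⟩ := hg.exists_posRoots <;> subst hβ
  · refine ⟨!![-1, 0; 1, 1], by simp [weylMatrices], 2 * k, -k, ⟨k, by ring⟩, fun v => ?_⟩
    simp only [hk, inner_sRefl, hA.inner_a1_a1, hA.inner_a2_a1, Matrix.of_apply, Matrix.cons_val',
      Matrix.cons_val_zero, Matrix.cons_val_one, Matrix.cons_val_fin_one]
    push_cast
    constructor <;> ring
  · refine ⟨!![1, 1; 0, -1], by simp [weylMatrices], -k, 2 * k, ⟨-k, by ring⟩, fun v => ?_⟩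
    simp only [hk, inner_sRefl, hA.inner_a1_a2, hA.inner_a2_a2, Matrix.of_apply, Matrix.cons_val',
      Matrix.cons_val_zero, Matrix.cons_val_one, Matrix.cons_val_fin_one]
    push_cast
    constructor <;> ring
  · refine ⟨!![0, -1; -1, 0], by simp [weylMatrices], k, k, ⟨0, by ring⟩, fun v => ?_⟩
    simp only [hk, inner_sRefl, hA.inner_a1_add, hA.inner_a2_add, inner_add_left,
      Matrix.of_apply, Matrix.cons_val', Matrix.cons_val_zero, Matrix.cons_val_one,
      Matrix.cons_val_fin_one]
    push_cast
    constructor <;> ring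

lemma mul_self_of_isAffRefl (hA : IsA2SimpleRoots a1 a2) {g : Equiv.Perm V}
    (hg : IsAffRefl a1 a2 g) : g * g = 1 := by
  obtain ⟨β, hβ, k, hk⟩ := hg.exists_posRoots
  ext v
  simp only [Equiv.Perm.mul_apply, hk, sRefl_involutive (hA.inner_self_of_mem_posRoots hβ) k v,
    Equiv.Perm.one_apply]

lemma isWeylAffine_of_mem (hA : IsA2SimpleRoots a1 a2) {g : Equiv.Perm V}
    (hg : g ∈ AffWeyl a1 a2) : IsWeylAffine a1 a2 g := by
  induction hg using Subgroup.closure_induction_left with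
  | one => exact isWeylAffine_one
  | mul_left x hx y _ ih => exact (hA.isWeylAffine_of_isAffRefl hx).mul ih
  | inv_mul_cancel x hx y _ ih =>
    rw [inv_eq_of_mul_eq_one_left (hA.mul_self_of_isAffRefl hx)]
    exact (hA.isWeylAffine_of_isAffRefl hx).mul ih

lemma exists_eq_sRefl (hA : IsA2SimpleRoots a1 a2) {α : V} (hα : α ∈ PosRoots a1 a2) (k : ℤ) :
    ∃ s : AffWeyl a1 a2, ∀ v, (s : Equiv.Perm V) v = sRefl α k v :=
  ⟨⟨(sRefl_involutive (hA.inner_self_of_mem_posRoots hα) k).toPerm,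
    Subgroup.subset_closure ⟨α, .inl hα, k, fun _ => rfl⟩⟩, fun _ => rfl⟩

lemma exists_isCenter_apply (hA : IsA2SimpleRoots a1 a2) {q : V} (hq1 : ⟪a1, q⟫ = 1 / 3)
    (hq2 : ⟪a2, q⟫ = 1 / 3) (w : AffWeyl a1 a2) :
    ∃ X Y ρ, IsCenter a1 a2 ((w : Equiv.Perm V) q) X Y ρ :=
  (hA.isWeylAffine_of_mem w.2).isCenter_apply hq1 hq2

lemma eq_one_of_isWeylAffine (hA : IsA2SimpleRoots a1 a2) {q : V} (hq1 : ⟪a1, q⟫ = 1 / 3)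
    (hq2 : ⟪a2, q⟫ = 1 / 3) {g : Equiv.Perm V} (hg : IsWeylAffine a1 a2 g) (hfix : g q = q) :
    g = 1 := by
  obtain ⟨M, hM, t₁, t₂, ht, hgv⟩ := hg
  have e₁ : M 0 0 + M 0 1 + 3 * t₁ = 1 := by
    have h := (hgv q).1
    rw [hfix, hq1, hq2] at h
    exact_mod_cast (by linarith : (M 0 0 + M 0 1 + 3 * t₁ : ℝ) = 1)
  have e₂ : M 1 0 + M 1 1 + 3 * t₂ = 1 := by
    have h := (hgv q).2
    rw [hfix, hq1, hq2] at h
    exact_mod_cast (by linarith : (M 1 0 + M 1 1 + 3 * t₂ : ℝ) = 1)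
  obtain rfl : M = 1 := by
    simp only [weylMatrices, List.mem_cons, List.not_mem_nil, or_false] at hM
    rcases hM with rfl | rfl | rfl | rfl | rfl | rfl
    · rfl
    all_goals
      simp only [Matrix.of_apply, Matrix.cons_val', Matrix.cons_val_zero, Matrix.cons_val_one,
        Matrix.cons_val_fin_one] at e₁ e₂
      omega
  obtain rfl : t₁ = 0 := by simpa using e₁
  obtain rfl : t₂ = 0 := by simpa using e₂
  exact Equiv.ext fun v => hA.ext_inner (by simpa using (hgv v).1) (by simpa using (hgv v).2)

end IsA2SimpleRoots

namespace IsCenter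

variable {v : V} {X Y ρ : ℤ}

lemma rho_sub (hv : IsCenter a1 a2 v X Y ρ) : 3 - ρ = 1 ∨ 3 - ρ = 2 := by
  have := hv.rho; omega

lemma inner_add (hv : IsCenter a1 a2 v X Y ρ) :
    ⟪a1 + a2, v⟫ = ((X + Y + ρ - 1 : ℤ) : ℝ) + ((3 - ρ : ℤ) : ℝ) / 3 := by
  rw [inner_add_left, hv.inner_a1, hv.inner_a2]
  push_cast
  ring

lemma sepCount_eq (hv : IsCenter a1 a2 v X Y ρ) :
    sepCount a1 a2 v = X.natAbs + Y.natAbs + (X + Y + ρ - 1).natAbs := by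
  rw [sepCount, hv.inner_a1, hv.inner_a2, hv.inner_add, floor_intCast_add_div_three X hv.rho,
    floor_intCast_add_div_three Y hv.rho, floor_intCast_add_div_three _ hv.rho_sub]

lemma sRefl_a1 (hv : IsCenter a1 a2 v X Y ρ) (hA : IsA2SimpleRoots a1 a2) (k : ℤ) :
    IsCenter a1 a2 (sRefl a1 k v) (2 * k - X - 1) (X + Y - k + ρ - 1) (3 - ρ) where
  inner_a1 := by
    rw [inner_sRefl, hA.inner_a1_a1, hv.inner_a1]; push_cast; ring
  inner_a2 := by
    rw [inner_sRefl, hA.inner_a2_a1, hv.inner_a1, hv.inner_a2]; push_cast; ring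
  rho := hv.rho_sub

lemma sRefl_a2 (hv : IsCenter a1 a2 v X Y ρ) (hA : IsA2SimpleRoots a1 a2) (k : ℤ) :
    IsCenter a1 a2 (sRefl a2 k v) (X + Y - k + ρ - 1) (2 * k - Y - 1) (3 - ρ) where
  inner_a1 := by
    rw [inner_sRefl, hA.inner_a1_a2, hv.inner_a1, hv.inner_a2]; push_cast; ring
  inner_a2 := by
    rw [inner_sRefl, hA.inner_a2_a2, hv.inner_a2]; push_cast; ring
  rho := hv.rho_sub

lemma sRefl_add (hv : IsCenter a1 a2 v X Y ρ) (hA : IsA2SimpleRoots a1 a2) (k : ℤ) :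
    IsCenter a1 a2 (sRefl (a1 + a2) k v) (k - Y - 1) (k - X - 1) (3 - ρ) where
  inner_a1 := by
    rw [inner_sRefl, hA.inner_a1_add, inner_add_left, hv.inner_a1, hv.inner_a2]; push_cast; ring
  inner_a2 := by
    rw [inner_sRefl, hA.inner_a2_add, inner_add_left, hv.inner_a1, hv.inner_a2]; push_cast; ring
  rho := hv.rho_sub

lemma sepCount_le_sepCount_add_one (hv : IsCenter a1 a2 v X Y ρ) (hA : IsA2SimpleRoots a1 a2)
    {g : Equiv.Perm V} (hg : IsSimpleRefl a1 a2 g) :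
    sepCount a1 a2 (g v) ≤ sepCount a1 a2 v + 1 := by
  have := hv.rho
  rw [hv.sepCount_eq]
  rcases hg with h | h | h <;> rw [h]
  · rw [(hv.sRefl_a1 hA 0).sepCount_eq]; omega
  · rw [(hv.sRefl_a2 hA 0).sepCount_eq]; omega
  · rw [(hv.sRefl_add hA 1).sepCount_eq]; omega

lemma sepCount_sRefl_lt (hv : IsCenter a1 a2 v X Y ρ) (hA : IsA2SimpleRoots a1 a2)
    (hns : v ∉ StripUnion a1 a2) {δ : V} (hδ : δ ∈ PosRoots a1 a2) {ε : ℤ} (hε : ε = 0 ∨ ε = 1)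
    (hnear : |⟪δ, v⟫ - ε| < |⟪δ, v⟫ - (1 - ε)|) :
    sepCount a1 a2 (sRefl δ ε v) < sepCount a1 a2 v := by
  simp only [StripUnion, Set.mem_union, not_or] at hns
  obtain ⟨⟨h₁, h₂⟩, h₃⟩ := hns
  rw [mem_strip_iff hv.inner_a1 hv.rho] at h₁
  rw [mem_strip_iff hv.inner_a2 hv.rho] at h₂
  rw [mem_strip_iff hv.inner_add hv.rho_sub] at h₃
  have := hv.rho
  rw [hv.sepCount_eq]
  rcases hδ with rfl | rfl | rfl
  · have := mul_pos_of_abs_sub_lt_abs_sub hv.inner_a1 hnear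
    rw [(hv.sRefl_a1 hA ε).sepCount_eq]
    rcases hε with rfl | rfl <;> omega
  · have := mul_pos_of_abs_sub_lt_abs_sub hv.inner_a2 hnear
    rw [(hv.sRefl_a2 hA ε).sepCount_eq]
    rcases hε with rfl | rfl <;> omega
  · have := mul_pos_of_abs_sub_lt_abs_sub hv.inner_add hnear
    rw [(hv.sRefl_add hA ε).sepCount_eq]
    rcases hε with rfl | rfl <;> omega

lemma eq_of_sepCount_eq_zero (hv : IsCenter a1 a2 v X Y ρ) (hA : IsA2SimpleRoots a1 a2) {q : V}
    (hq1 : ⟪a1, q⟫ = 1 / 3) (hq2 : ⟪a2, q⟫ = 1 / 3) (h : sepCount a1 a2 v = 0) : v = q := by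
  have := hv.rho
  rw [hv.sepCount_eq] at h
  obtain ⟨rfl, rfl, rfl⟩ : X = 0 ∧ Y = 0 ∧ ρ = 1 := by omega
  refine hA.ext_inner ?_ ?_
  · rw [hv.inner_a1, hq1]; norm_num
  · rw [hv.inner_a2, hq2]; norm_num

end IsCenter

lemma IsCenter.exists_isSimpleRefl_sepCount_add_one {v : V} {X Y ρ : ℤ}
    (hv : IsCenter a1 a2 v X Y ρ) (hA : IsA2SimpleRoots a1 a2) (h : sepCount a1 a2 v ≠ 0) :
    ∃ s : AffWeyl a1 a2, IsSimpleRefl a1 a2 s ∧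
      sepCount a1 a2 ((s : Equiv.Perm V) v) + 1 = sepCount a1 a2 v := by
  have := hv.rho
  rw [hv.sepCount_eq] at h ⊢
  by_cases hX : X < 0
  · obtain ⟨s, hs⟩ := hA.exists_eq_sRefl (α := a1) (.inl rfl) 0
    exact ⟨s, .inl hs, by rw [hs, (hv.sRefl_a1 hA 0).sepCount_eq]; omega⟩
  by_cases hY : Y < 0
  · obtain ⟨s, hs⟩ := hA.exists_eq_sRefl (α := a2) (.inr (.inl rfl)) 0
    exact ⟨s, .inr (.inl hs), by rw [hs, (hv.sRefl_a2 hA 0).sepCount_eq]; omega⟩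
  · obtain ⟨s, hs⟩ := hA.exists_eq_sRefl (α := a1 + a2) (.inr (.inr rfl)) 1
    exact ⟨s, .inr (.inr hs), by rw [hs, (hv.sRefl_add hA 1).sepCount_eq]; omega⟩

lemma len_le_length {w : AffWeyl a1 a2} {l : List (AffWeyl a1 a2)}
    (hl : ∀ s ∈ l, IsSimpleRefl a1 a2 s) (hw : l.prod = w) : len a1 a2 w ≤ l.length :=
  Nat.sInf_le ⟨l, hl, rfl, hw⟩

lemma exists_length_eq_len {w : AffWeyl a1 a2} {l : List (AffWeyl a1 a2)}
    (hl : ∀ s ∈ l, IsSimpleRefl a1 a2 s) (hw : l.prod = w) :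
    ∃ l' : List (AffWeyl a1 a2), (∀ s ∈ l', IsSimpleRefl a1 a2 s) ∧
      l'.length = len a1 a2 w ∧ l'.prod = w :=
  Nat.sInf_mem (s := {n | ∃ l : List (AffWeyl a1 a2),
    (∀ g ∈ l, IsSimpleRefl a1 a2 (g : Equiv.Perm V)) ∧ l.length = n ∧ l.prod = w})
    ⟨l.length, l, hl, rfl, hw⟩

namespace IsA2SimpleRoots

variable {q : V}

lemma exists_isSimpleRefl_word (hA : IsA2SimpleRoots a1 a2) (hq1 : ⟪a1, q⟫ = 1 / 3)
    (hq2 : ⟪a2, q⟫ = 1 / 3) (w : AffWeyl a1 a2) :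
    ∃ l : List (AffWeyl a1 a2), (∀ s ∈ l, IsSimpleRefl a1 a2 s) ∧
      l.length = sepCount a1 a2 ((w : Equiv.Perm V) q) ∧ l.prod = w := by
  induction hN : sepCount a1 a2 ((w : Equiv.Perm V) q) using Nat.strong_induction_on
    generalizing w with
  | _ N ih =>
  obtain ⟨X, Y, ρ, hc⟩ := hA.exists_isCenter_apply hq1 hq2 w
  rcases Nat.eq_zero_or_pos N with rfl | hN0
  · have hw : w = 1 := Subtype.ext <| hA.eq_one_of_isWeylAffine hq1 hq2
      (hA.isWeylAffine_of_mem w.2) (hc.eq_of_sepCount_eq_zero hA hq1 hq2 hN)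
    exact ⟨[], by simp, rfl, hw.symm⟩
  · obtain ⟨s, hs, hsN⟩ := hc.exists_isSimpleRefl_sepCount_add_one hA (by omega)
    obtain ⟨l, hl, hlen, hprod⟩ := ih (N - 1) (by omega) (s * w) (by
      change sepCount a1 a2 ((s : Equiv.Perm V) ((w : Equiv.Perm V) q)) = N - 1
      omega)
    have hss : s * s = 1 := Subtype.ext (hA.mul_self_of_isAffRefl hs.isAffRefl)
    refine ⟨s :: l, List.forall_mem_cons.2 ⟨hs, hl⟩, by simp only [List.length_cons]; omega, ?_⟩
    rw [List.prod_cons, hprod, ← mul_assoc, hss, one_mul]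

lemma sepCount_le_length (hA : IsA2SimpleRoots a1 a2) (hq1 : ⟪a1, q⟫ = 1 / 3)
    (hq2 : ⟪a2, q⟫ = 1 / 3) {l : List (AffWeyl a1 a2)} (hl : ∀ s ∈ l, IsSimpleRefl a1 a2 s) :
    sepCount a1 a2 ((l.prod : Equiv.Perm V) q) ≤ l.length := by
  induction l with
  | nil =>
    have hq : IsCenter a1 a2 q 0 0 1 := ⟨by rw [hq1]; norm_num, by rw [hq2]; norm_num, .inl rfl⟩
    simp only [List.prod_nil, List.length_nil]
    exact hq.sepCount_eq.le
  | cons s l ih =>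
    obtain ⟨X, Y, ρ, hc⟩ := hA.exists_isCenter_apply hq1 hq2 l.prod
    calc sepCount a1 a2 (((s :: l).prod : Equiv.Perm V) q)
        = sepCount a1 a2 ((s : Equiv.Perm V) ((l.prod : Equiv.Perm V) q)) := by
          rw [List.prod_cons]; rfl
      _ ≤ sepCount a1 a2 ((l.prod : Equiv.Perm V) q) + 1 :=
          hc.sepCount_le_sepCount_add_one hA (hl s List.mem_cons_self)
      _ ≤ (s :: l).length := by
          simpa using ih fun t ht => hl t (List.mem_cons_of_mem s ht)

lemma len_eq_sepCount (hA : IsA2SimpleRoots a1 a2) (hq1 : ⟪a1, q⟫ = 1 / 3)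
    (hq2 : ⟪a2, q⟫ = 1 / 3) (w : AffWeyl a1 a2) :
    len a1 a2 w = sepCount a1 a2 ((w : Equiv.Perm V) q) := by
  obtain ⟨l, hl, hlen, hprod⟩ := hA.exists_isSimpleRefl_word hq1 hq2 w
  obtain ⟨l', hl', hlen', rfl⟩ := exists_length_eq_len hl hprod
  exact le_antisymm (hlen ▸ len_le_length hl hprod) (hlen' ▸ hA.sepCount_le_length hq1 hq2 hl')

lemma bruhatLT_of_len_lt (hA : IsA2SimpleRoots a1 a2) {r w : AffWeyl a1 a2}
    (hr : IsReflW a1 a2 r) (h : len a1 a2 (r * w) < len a1 a2 w) : BruhatLT a1 a2 (r * w) w := by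
  have hrr : r * r = 1 := Subtype.ext (hA.mul_self_of_isAffRefl hr)
  exact ⟨.single ⟨r, hr, by rw [← mul_assoc, hrr, one_mul], h⟩, fun heq => h.ne (by rw [heq])⟩

end IsA2SimpleRoots

end

/-- **Lemma.** Let `w` be non-spiral, `δ ∈ {α₁,α₂,α̃}`, and `ε ∈ {0,1}` with `H_{δ,ε}` nearer
to `w q` than `H_{δ,1−ε}`. Then `s_{δ,ε} w < w` in the Bruhat order. -/
theorem reflect_in_nearer_hyperplane_lt
    (a1 a2 q : V)
    (hnorm1 : ⟪a1, a1⟫ = 2) (hnorm2 : ⟪a2, a2⟫ = 2) (hip : ⟪a1, a2⟫ = -1)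
    (hq1 : ⟪a1, q⟫ = 1/3) (hq2 : ⟪a2, q⟫ = 1/3)
    (w : AffWeyl a1 a2) (hns : ¬ IsSpiral a1 a2 q w)
    (δ : V) (hδ : δ ∈ PosRoots a1 a2) (ε : ℤ) (hε : ε = 0 ∨ ε = 1)
    (hnear : |⟪δ, act w q⟫ - (ε : ℝ)| < |⟪δ, act w q⟫ - (1 - (ε : ℝ))|)
    (r : AffWeyl a1 a2) (hr : ∀ v : V, act r v = sRefl δ ε v) :
    BruhatLT a1 a2 (r * w) w := by
  have hA : IsA2SimpleRoots a1 a2 := ⟨hnorm1, hnorm2, hip⟩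
  obtain ⟨X, Y, ρ, hc⟩ := hA.exists_isCenter_apply hq1 hq2 w
  refine hA.bruhatLT_of_len_lt ⟨δ, .inl hδ, ε, hr⟩ ?_
  have hrw : ((r * w : AffWeyl a1 a2) : Equiv.Perm V) q = sRefl δ ε (act w q) := hr _
  rw [hA.len_eq_sepCount hq1 hq2, hA.len_eq_sepCount hq1 hq2, hrw]
  exact hc.sepCount_sRefl_lt hA hns hδ hε hnear
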